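/- If G has at most two maximum independent sets and diadem(G) = corona(G), then G is a König-Egerváry graph, i.e., α(G) + μ(G) = |V(G)|. -/

import Mathlib

open Set

variable {V : Type*}

/-- `S` is an independent set of `G`. -/
def IndepSet (G : SimpleGraph V) (S : Set V) : Prop :=
  ∀ x ∈ S, ∀ y ∈ S, ¬ G.Adj x y

/-- The independence number `α(G)`. -/
noncomputable def alpha (G : SimpleGraph V) : ℕ :=
  sSup {n | ∃ S : Set V, IndepSet G S ∧ S.ncard = n}

/-- `S` is a maximum independent set of `G`. -/
def MaxIndep (G : SimpleGraph V) (S : Set V) : Prop :=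
  IndepSet G S ∧ S.ncard = alpha G

/-- `Ω(G)`, the family of all maximum independent sets. -/
def Omega (G : SimpleGraph V) : Set (Set V) := {S | MaxIndep G S}

/-- `core(G)`, the intersection of all maximum independent sets. -/
def core (G : SimpleGraph V) : Set V := ⋂₀ Omega G

/-- `corona(G)`, the union of all maximum independent sets. -/
def corona (G : SimpleGraph V) : Set V := ⋃₀ Omega G

/-- The matching number `μ(G)`. -/
noncomputable def matchNum (G : SimpleGraph V) : ℕ :=
  sSup {n | ∃ M : G.Subgraph, M.IsMatching ∧ M.edgeSet.ncard = n}

/-- A matching from `X` into `Y`: an injection `f` on `X` into `Y` such that each `x ∈ X`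
is adjacent to `f x` and the edges `{x, f x}` are pairwise disjoint. -/
def MatchingFrom (G : SimpleGraph V) (X Y : Set V) : Prop :=
  ∃ f : V → V, Set.InjOn f X ∧ (∀ x ∈ X, f x ∈ Y ∧ G.Adj x (f x)) ∧
    ∀ x ∈ X, ∀ y ∈ X, x ≠ y → f x ≠ y

/-- The neighborhood `N(X)` of a set of vertices. -/
def nbhd (G : SimpleGraph V) (X : Set V) : Set V := {v | ∃ x ∈ X, G.Adj x v}

/-- The difference `d(X) = |X| - |N(X)|`. -/
noncomputable def diffd (G : SimpleGraph V) (X : Set V) : ℤ :=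
  (X.ncard : ℤ) - ((nbhd G X).ncard : ℤ)

/-- A critical independent set. -/
def CritIndep (G : SimpleGraph V) (A : Set V) : Prop :=
  IndepSet G A ∧ ∀ I : Set V, IndepSet G I → diffd G I ≤ diffd G A

/-- A maximum(-cardinality) critical independent set. -/
def MaxCritIndep (G : SimpleGraph V) (A : Set V) : Prop :=
  CritIndep G A ∧ ∀ B : Set V, CritIndep G B → B.ncard ≤ A.ncard

/-- `nucleus(G)`, the intersection of all maximum critical independent sets. -/
def nucleus (G : SimpleGraph V) : Set V := ⋂₀ {A | MaxCritIndep G A}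

/-- `diadem(G)`, the union of all maximum critical independent sets. -/
def diadem (G : SimpleGraph V) : Set V := ⋃₀ {A | MaxCritIndep G A}

/-!
The difference `d(X) = |X| - |N(X)|` is supermodular, so the sets of maximal difference are
closed under unions; hence `d(diadem G)` is the critical difference. If `Ω(G) = {S₁, S₂}`, then
`N(S₁ ∪ S₂) = (S₁ ∩ S₂)ᶜ` gives `d(corona G) = 2α - n = d(S₁)`, so `diadem G = corona G` makes
the maximum independent set `S₁` critical. By Hall's theorem a critical independent set `A` is
matched into by `N(A)`, which for `S₁` is `S₁ᶜ`; so `μ ≥ n - α`, while `μ ≤ n - α` holds because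
every matching edge has an endpoint outside `S₁`.
-/

section Neighborhood

variable {G : SimpleGraph V}

lemma nbhd_mono {X Y : Set V} (h : X ⊆ Y) : nbhd G X ⊆ nbhd G Y :=
  fun _ ⟨x, hx, hadj⟩ => ⟨x, h hx, hadj⟩

lemma nbhd_union (X Y : Set V) : nbhd G (X ∪ Y) = nbhd G X ∪ nbhd G Y := by
  ext v
  simp only [nbhd, mem_union, mem_ofPred_eq]
  constructor
  · rintro ⟨x, hx | hx, hadj⟩
    exacts [Or.inl ⟨x, hx, hadj⟩, Or.inr ⟨x, hx, hadj⟩]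
  · rintro (⟨x, hx, hadj⟩ | ⟨x, hx, hadj⟩)
    exacts [⟨x, Or.inl hx, hadj⟩, ⟨x, Or.inr hx, hadj⟩]

lemma nbhd_inter_subset (X Y : Set V) : nbhd G (X ∩ Y) ⊆ nbhd G X ∩ nbhd G Y :=
  subset_inter (nbhd_mono inter_subset_left) (nbhd_mono inter_subset_right)

lemma IndepSet.mono {S T : Set V} (hS : IndepSet G S) (hT : T ⊆ S) : IndepSet G T :=
  fun x hx y hy => hS x (hT hx) y (hT hy)

lemma IndepSet.disjoint_nbhd {S : Set V} (hS : IndepSet G S) : Disjoint S (nbhd G S) :=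
  disjoint_left.mpr fun v hv ⟨x, hx, hadj⟩ => hS x hx v hv hadj

lemma indepSet_diff_nbhd (X : Set V) : IndepSet G (X \ nbhd G X) :=
  fun x hx _ hy hadj => hy.2 ⟨x, hx.1, hadj⟩

end Neighborhood

section Critical

variable [Finite V] {G : SimpleGraph V}

lemma diffd_le_diffd_diff_nbhd (X : Set V) : diffd G X ≤ diffd G (X \ nbhd G X) := by
  have hN : nbhd G (X \ nbhd G X) ⊆ nbhd G X \ X :=
    fun v ⟨u, hu, hadj⟩ => ⟨⟨u, hu.1, hadj⟩, fun hv => hu.2 ⟨v, hv, hadj.symm⟩⟩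
  have h₁ := ncard_inter_add_ncard_sdiff_eq_ncard X (nbhd G X)
  have h₂ := ncard_inter_add_ncard_sdiff_eq_ncard (nbhd G X) X
  have h₃ := ncard_le_ncard hN
  rw [inter_comm] at h₂
  unfold diffd
  omega

lemma CritIndep.diffd_le {A : Set V} (hA : CritIndep G A) (X : Set V) :
    diffd G X ≤ diffd G A :=
  (diffd_le_diffd_diff_nbhd X).trans (hA.2 _ (indepSet_diff_nbhd X))

variable (G) in
lemma exists_maxCritIndep : ∃ A : Set V, MaxCritIndep G A := by
  obtain ⟨A₀, hA₀, hmax₀⟩ := exists_max_image {I : Set V | IndepSet G I} (diffd G)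
    (toFinite _) ⟨∅, fun _ hx => absurd hx (notMem_empty _)⟩
  obtain ⟨A, hA, hmax⟩ := exists_max_image {B : Set V | CritIndep G B} ncard
    (toFinite _) ⟨A₀, hA₀, hmax₀⟩
  exact ⟨A, hA, hmax⟩

lemma diffd_add_diffd_le_diffd_union_add_diffd_inter (X Y : Set V) :
    diffd G X + diffd G Y ≤ diffd G (X ∪ Y) + diffd G (X ∩ Y) := by
  have h₁ := ncard_union_add_ncard_inter X Y
  have h₂ := ncard_union_add_ncard_inter (nbhd G X) (nbhd G Y)
  have h₃ := ncard_le_ncard (nbhd_inter_subset (G := G) X Y)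
  unfold diffd
  rw [nbhd_union]
  omega

/-- Maximizers of the supermodular function `diffd` are closed under finite unions. -/
lemma CritIndep.diffd_union_sUnion {A : Set V} (hA : CritIndep G A) {F : Set (Set V)}
    (hF : ∀ X ∈ F, diffd G X = diffd G A) : diffd G (A ∪ ⋃₀ F) = diffd G A := by
  induction F, F.toFinite using Set.Finite.induction_on with
  | empty => simp
  | @insert X F _ _ ih =>
    have hX := hF X (mem_insert X F)
    have hrest := ih fun Y hY => hF Y (mem_insert_of_mem X hY)
    have hsup := diffd_add_diffd_le_diffd_union_add_diffd_inter (G := G) X (A ∪ ⋃₀ F)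
    rw [sUnion_insert, union_left_comm]
    have := hA.diffd_le (X ∪ (A ∪ ⋃₀ F))
    have := hA.diffd_le (X ∩ (A ∪ ⋃₀ F))
    omega

lemma MaxCritIndep.diffd_diadem {A : Set V} (hA : MaxCritIndep G A) :
    diffd G (diadem G) = diffd G A := by
  have hmem : A ∈ {B | MaxCritIndep G B} := hA
  rw [diadem, ← union_eq_self_of_subset_left (subset_sUnion_of_mem hmem)]
  exact hA.1.diffd_union_sUnion fun X hX => le_antisymm (hA.1.2 X hX.1.1) (hX.1.2 A hA.1.1)

end Critical

section MaxIndep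

variable [Finite V] {G : SimpleGraph V}

variable (G) in
lemma bddAbove_indepSet_ncard : BddAbove {n | ∃ S : Set V, IndepSet G S ∧ S.ncard = n} :=
  ⟨Nat.card V, by rintro n ⟨S, -, rfl⟩; exact ncard_le_card S⟩

lemma IndepSet.ncard_le_alpha {S : Set V} (hS : IndepSet G S) : S.ncard ≤ alpha G :=
  le_csSup (bddAbove_indepSet_ncard G) ⟨S, hS, rfl⟩

variable (G) in
lemma exists_maxIndep : ∃ S : Set V, MaxIndep G S := by
  obtain ⟨S, hS, hcard⟩ := Nat.sSup_mem (s := {n | ∃ S : Set V, IndepSet G S ∧ S.ncard = n})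
    ⟨0, ∅, fun _ hx => absurd hx (notMem_empty _), ncard_empty V⟩ (bddAbove_indepSet_ncard G)
  exact ⟨S, hS, hcard⟩

lemma MaxIndep.nbhd_eq_compl {S : Set V} (hS : MaxIndep G S) : nbhd G S = Sᶜ := by
  refine subset_antisymm (fun v hv hvS => disjoint_left.mp hS.1.disjoint_nbhd hvS hv) ?_
  intro v hv
  by_contra hvN
  have hindep : IndepSet G (insert v S) := by
    rintro x (rfl | hx) y (rfl | hy) hadj
    · exact G.loopless.irrefl _ hadj
    · exact hvN ⟨y, hy, hadj.symm⟩
    · exact hvN ⟨x, hx, hadj⟩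
    · exact hS.1 x hx y hy hadj
  have := hindep.ncard_le_alpha
  rw [ncard_insert_of_notMem hv, hS.2] at this
  omega

lemma MaxIndep.diffd_eq {S : Set V} (hS : MaxIndep G S) :
    diffd G S = 2 * (alpha G : ℤ) - Nat.card V := by
  have := ncard_add_ncard_compl S
  rw [diffd, hS.nbhd_eq_compl, hS.2] at *
  omega

lemma MaxIndep.diffd_union {S₁ S₂ : Set V} (h₁ : MaxIndep G S₁) (h₂ : MaxIndep G S₂) :
    diffd G (S₁ ∪ S₂) = 2 * (alpha G : ℤ) - Nat.card V := by
  have hN : nbhd G (S₁ ∪ S₂) = (S₁ ∩ S₂)ᶜ := by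
    rw [nbhd_union, h₁.nbhd_eq_compl, h₂.nbhd_eq_compl, compl_inter]
  have := ncard_union_add_ncard_inter S₁ S₂
  have := ncard_add_ncard_compl (S₁ ∩ S₂)
  rw [diffd, hN, h₁.2, h₂.2] at *
  omega

lemma exists_corona_eq_union (hΩ : (Omega G).ncard ≤ 2) :
    ∃ S₁ S₂ : Set V, MaxIndep G S₁ ∧ MaxIndep G S₂ ∧ corona G = S₁ ∪ S₂ := by
  obtain ⟨S, hS⟩ := exists_maxIndep G
  have hpos : 0 < (Omega G).ncard := (ncard_pos (toFinite _)).mpr (⟨S, hS⟩ : (Omega G).Nonempty)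
  obtain h₁ | h₂ : (Omega G).ncard = 1 ∨ (Omega G).ncard = 2 := by omega
  · obtain ⟨S₁, hΩ₁⟩ := ncard_eq_one.mp h₁
    have hS₁ : MaxIndep G S₁ := show S₁ ∈ Omega G by rw [hΩ₁]; rfl
    exact ⟨S₁, S₁, hS₁, hS₁, by rw [corona, hΩ₁, sUnion_singleton, union_self]⟩
  · obtain ⟨S₁, S₂, -, hΩ₂⟩ := ncard_eq_two.mp h₂
    have hS₁ : MaxIndep G S₁ := show S₁ ∈ Omega G by rw [hΩ₂]; exact mem_insert _ _
    have hS₂ : MaxIndep G S₂ := show S₂ ∈ Omega G by rw [hΩ₂]; exact mem_insert_of_mem _ rfl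
    exact ⟨S₁, S₂, hS₁, hS₂, by rw [corona, hΩ₂, sUnion_pair]⟩

end MaxIndep

lemma exists_injective_of_forall_ncard_le {α β : Type*} [Finite β] {X : Set α}
    {R : α → β → Prop} (h : ∀ T ⊆ X, T.Finite → T.ncard ≤ {y | ∃ x ∈ T, R x y}.ncard) :
    ∃ f : X → β, Function.Injective f ∧ ∀ x : X, R x (f x) := by
  classical
  obtain ⟨f, hf, hR⟩ := (Finset.all_card_le_biUnion_card_iff_exists_injective
    fun x : X => (toFinite {y | R x y}).toFinset).mp fun s => by
      have hT := h (Subtype.val '' (s : Set X)) (by simp) (s.finite_toSet.image _)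
      rw [ncard_image_of_injective _ Subtype.val_injective, ncard_coe_finset] at hT
      convert hT using 1
      rw [← ncard_coe_finset]
      congr 1
      ext y
      simp
  exact ⟨f, hf, fun x => by simpa using hR x⟩

section Matching

variable [Finite V] {G : SimpleGraph V}

lemma CritIndep.ncard_le_ncard_inter_nbhd {A T : Set V} (hA : CritIndep G A)
    (hT : T ⊆ nbhd G A) : T.ncard ≤ (A ∩ nbhd G T).ncard := by
  -- otherwise `A \ N(T)` would have a larger difference than `A`
  have hN : nbhd G (A \ nbhd G T) ⊆ nbhd G A \ T :=
    fun v ⟨u, hu, hadj⟩ => ⟨⟨u, hu.1, hadj⟩, fun hv => hu.2 ⟨v, hv, hadj.symm⟩⟩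
  have hd := hA.2 _ (hA.1.mono (sdiff_subset : A \ nbhd G T ⊆ A))
  have h₁ := ncard_inter_add_ncard_sdiff_eq_ncard A (nbhd G T)
  have h₂ := ncard_inter_add_ncard_sdiff_eq_ncard (nbhd G A) T
  have h₃ := ncard_le_ncard hN
  rw [inter_eq_right.mpr hT] at h₂
  unfold diffd at hd
  omega

lemma CritIndep.matchingFrom_nbhd {A : Set V} (hA : CritIndep G A) :
    MatchingFrom G (nbhd G A) A := by
  classical
  obtain ⟨f, hf, hfA⟩ := exists_injective_of_forall_ncard_le
    (R := fun x y => y ∈ A ∧ G.Adj x y) fun T hT _ => by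
      convert hA.ncard_le_ncard_inter_nbhd hT using 2
      ext y
      simp only [nbhd, mem_inter_iff, mem_ofPred_eq]
      grind
  refine ⟨fun v => if hv : v ∈ nbhd G A then f ⟨v, hv⟩ else v, ?_, fun x hx => ?_,
    fun x hx y hy _ => ?_⟩
  · intro x hx y hy hxy
    simp only [dif_pos hx, dif_pos hy] at hxy
    exact congrArg Subtype.val (hf hxy)
  · simpa only [dif_pos hx] using hfA ⟨x, hx⟩
  · simp only [dif_pos hx]
    exact fun hxy => disjoint_right.mp hA.1.disjoint_nbhd hy (hxy ▸ (hfA ⟨x, hx⟩).1)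

lemma SimpleGraph.Subgraph.IsMatching.ncard_edgeSet_le_ncard_compl {M : G.Subgraph}
    (hM : M.IsMatching) {S : Set V} (hS : IndepSet G S) : M.edgeSet.ncard ≤ Sᶜ.ncard := by
  classical
  let e : V → Sym2 V := fun v => if hv : v ∈ M.verts then hM.toEdge ⟨v, hv⟩ else s(v, v)
  have he : ∀ {x y}, M.Adj x y → x ∉ S → s(x, y) ∈ e '' Sᶜ := fun hxy hx =>
    ⟨_, hx, by simp [e, M.edge_vert hxy, hM.toEdge_eq_of_adj hxy]⟩
  have hsub : M.edgeSet ⊆ e '' Sᶜ := by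
    intro d hd
    induction d using Sym2.ind with
    | _ x y =>
      by_cases hx : x ∈ S
      · rw [Sym2.eq_swap]
        exact he hd.symm fun hy => hS x hx y hy (M.adj_sub hd)
      · exact he hd hx
  exact (ncard_le_ncard hsub).trans (ncard_image_le (toFinite _))

lemma matchNum_le_ncard_compl {S : Set V} (hS : IndepSet G S) : matchNum G ≤ Sᶜ.ncard :=
  csSup_le ⟨0, ⊥, fun _ hv => absurd hv (notMem_empty _), by simp⟩
    fun _ ⟨_, hM, hn⟩ => hn ▸ hM.ncard_edgeSet_le_ncard_compl hS

lemma MatchingFrom.ncard_le_matchNum {X Y : Set V} (h : MatchingFrom G X Y) :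
    X.ncard ≤ matchNum G := by
  obtain ⟨f, hinj, hf, hne⟩ := h
  have hfX : ∀ x ∈ X, f x ∉ X := fun x hx hfx => hne x hx (f x) hfx (hf x hx).2.ne rfl
  let M : G.Subgraph :=
    { verts := X ∪ f '' X
      Adj := fun x y => (x ∈ X ∧ y = f x) ∨ (y ∈ X ∧ x = f y)
      adj_sub := by
        rintro x y (⟨hx, rfl⟩ | ⟨hy, rfl⟩)
        exacts [(hf x hx).2, (hf y hy).2.symm]
      edge_vert := by
        rintro x y (⟨hx, -⟩ | ⟨hy, rfl⟩)
        exacts [Or.inl hx, Or.inr ⟨y, hy, rfl⟩]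
      symm := ⟨fun _ _ => Or.symm⟩ }
  have hM : M.IsMatching := by
    rintro v (hv | ⟨u, hu, rfl⟩)
    · refine ⟨f v, Or.inl ⟨hv, rfl⟩, ?_⟩
      rintro w (⟨-, rfl⟩ | ⟨hw, rfl⟩)
      exacts [rfl, absurd hv (hfX w hw)]
    · refine ⟨u, Or.inr ⟨hu, rfl⟩, ?_⟩
      rintro w (⟨hw, -⟩ | ⟨hw, heq⟩)
      exacts [absurd hw (hfX u hu), hinj hw hu heq.symm]
  have hbdd : BddAbove {n | ∃ M : G.Subgraph, M.IsMatching ∧ M.edgeSet.ncard = n} :=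
    ⟨Nat.card (Sym2 V), fun _ ⟨M', _, hn⟩ => hn ▸ ncard_le_card _⟩
  refine (ncard_le_ncard_of_injOn (fun x => s(x, f x)) (fun x hx => Or.inl ⟨hx, rfl⟩) ?_).trans
    (le_csSup hbdd ⟨M, hM, rfl⟩)
  intro x hx y hy hxy
  rcases Sym2.eq_iff.mp hxy with ⟨hxy, -⟩ | ⟨hfy, -⟩
  exacts [hxy, absurd (hfy ▸ hx) (hfX y hy)]

lemma MaxIndep.alpha_add_matchNum_eq {S : Set V} (hS : MaxIndep G S) (hcrit : CritIndep G S) :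
    alpha G + matchNum G = Nat.card V := by
  have hlower := hcrit.matchingFrom_nbhd.ncard_le_matchNum
  have hupper := matchNum_le_ncard_compl hS.1
  rw [hS.nbhd_eq_compl] at hlower
  rw [← hS.2, ← ncard_add_ncard_compl S]
  omega

end Matching

theorem stmt_9 [Fintype V] (G : SimpleGraph V)
    (hΩ : (Omega G).ncard ≤ 2) (h : diadem G = corona G) :
    alpha G + matchNum G = Fintype.card V := by
  obtain ⟨A, hA⟩ := exists_maxCritIndep G
  obtain ⟨S₁, S₂, h₁, h₂, hcorona⟩ := exists_corona_eq_union hΩ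
  have hcrit : CritIndep G S₁ := by
    refine ⟨h₁.1, fun I hI => ?_⟩
    rw [h₁.diffd_eq, ← h₁.diffd_union h₂, ← hcorona, ← h, hA.diffd_diadem]
    exact hA.1.2 I hI
  rw [← Nat.card_eq_fintype_card]
  exact h₁.alpha_add_matchNum_eq hcrit
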